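/- Let L be a finite lattice with a CN-labeling λ : Cov(L) → P and let Θ be a lattice congruence of L. Define an edge-labeling λ̃ of the quotient lattice L/Θ by λ̃([x]_Θ, [y]_Θ) = λ(x, y) whenever (x, y) ∈ Cov(L) and x ≢ y mod Θ. Then λ̃ is well-defined (its value on a covering pair of L/Θ does not depend on the chosen representing covering pair of L) and λ̃ is a CN-labeling of L/Θ. -/

import Mathlib

universe u v

/-- A lattice congruence on a lattice `L`: an equivalence relation compatible with
meets and joins. -/
structure LatticeCongruence (L : Type u) [Lattice L] : Type u where
  r : L → L → Prop
  refl : ∀ x, r x x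
  symm : ∀ x y, r x y → r y x
  trans : ∀ x y z, r x y → r y z → r x z
  inf_congr : ∀ x y z, r x y → r (x ⊓ z) (y ⊓ z)
  sup_congr : ∀ x y z, r x y → r (x ⊔ z) (y ⊔ z)

namespace LatticeCongruence

variable {L : Type u} [Lattice L]

theorem ext' {c d : LatticeCongruence L} (h : ∀ x y, c.r x y ↔ d.r x y) : c = d := by
  have hr : c.r = d.r := funext fun x => funext fun y => propext (h x y)
  cases c; cases d
  subst hr
  rfl

/-- Congruences are ordered by refinement. -/
instance : PartialOrder (LatticeCongruence L) where
  le c d := ∀ x y : L, c.r x y → d.r x y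
  le_refl c := fun _ _ h => h
  le_trans a b c hab hbc := fun x y h => hbc x y (hab x y h)
  le_antisymm a b hab hba := ext' fun x y => ⟨hab x y, hba x y⟩

/-- The join of two congruences. -/
def conSup (c d : LatticeCongruence L) : LatticeCongruence L where
  r x y := ∀ e : LatticeCongruence L, c ≤ e → d ≤ e → e.r x y
  refl := fun x e _ _ => e.refl x
  symm := fun x y h e hc hd => e.symm x y (h e hc hd)
  trans := fun x y z h h' e hc hd => e.trans x y z (h e hc hd) (h' e hc hd)
  inf_congr := fun x y z h e hc hd => e.inf_congr x y z (h e hc hd)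
  sup_congr := fun x y z h e hc hd => e.sup_congr x y z (h e hc hd)

/-- The meet of two congruences (their intersection). -/
def conInf (c d : LatticeCongruence L) : LatticeCongruence L where
  r x y := c.r x y ∧ d.r x y
  refl := fun x => ⟨c.refl x, d.refl x⟩
  symm := fun x y h => ⟨c.symm x y h.1, d.symm x y h.2⟩
  trans := fun x y z h h' => ⟨c.trans x y z h.1 h'.1, d.trans x y z h.2 h'.2⟩
  inf_congr := fun x y z h => ⟨c.inf_congr x y z h.1, d.inf_congr x y z h.2⟩
  sup_congr := fun x y z h => ⟨c.sup_congr x y z h.1, d.sup_congr x y z h.2⟩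

/-- The lattice `Con(L)` of congruences of `L`. -/
instance : Lattice (LatticeCongruence L) where
  sup := conSup
  le_sup_left c d := fun x y h e hc _ => hc x y h
  le_sup_right c d := fun x y h e _ hd => hd x y h
  sup_le a b c hac hbc := fun x y h => h c hac hbc
  inf := conInf
  inf_le_left c d := fun _ _ h => h.1
  inf_le_right c d := fun _ _ h => h.2
  le_inf a b c hab hac := fun x y h => ⟨hab x y h, hac x y h⟩

/-- `conGen a b` is the finest lattice congruence identifying `a` and `b`. -/
def conGen (a b : L) : LatticeCongruence L where
  r x y := ∀ e : LatticeCongruence L, e.r a b → e.r x y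
  refl := fun x e _ => e.refl x
  symm := fun x y h e he => e.symm x y (h e he)
  trans := fun x y z h h' e he => e.trans x y z (h e he) (h' e he)
  inf_congr := fun x y z h e he => e.inf_congr x y z (h e he)
  sup_congr := fun x y z h e he => e.sup_congr x y z (h e he)

/-- The setoid underlying a lattice congruence. -/
def setoid (c : LatticeCongruence L) : Setoid L :=
  ⟨c.r, ⟨c.refl, fun h => c.symm _ _ h, fun h h' => c.trans _ _ _ h h'⟩⟩

/-- The quotient of `L` by a lattice congruence. -/
def Quo (c : LatticeCongruence L) : Type u := Quotient c.setoid

/-- The canonical quotient map `L → L/Θ`. -/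
def mkQ (c : LatticeCongruence L) (x : L) : c.Quo := Quotient.mk c.setoid x

variable (c : LatticeCongruence L)

theorem sup_congr₂ {x x' y y' : L} (hx : c.r x x') (hy : c.r y y') :
    c.r (x ⊔ y) (x' ⊔ y') := by
  have h1 : c.r (x ⊔ y) (x' ⊔ y) := c.sup_congr x x' y hx
  have h2 : c.r (y ⊔ x') (y' ⊔ x') := c.sup_congr y y' x' hy
  rw [sup_comm y x', sup_comm y' x'] at h2
  exact c.trans _ _ _ h1 h2

theorem inf_congr₂ {x x' y y' : L} (hx : c.r x x') (hy : c.r y y') :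
    c.r (x ⊓ y) (x' ⊓ y') := by
  have h1 : c.r (x ⊓ y) (x' ⊓ y) := c.inf_congr x x' y hx
  have h2 : c.r (y ⊓ x') (y' ⊓ x') := c.inf_congr y y' x' hy
  rw [inf_comm y x', inf_comm y' x'] at h2
  exact c.trans _ _ _ h1 h2

instance : Max c.Quo :=
  ⟨Quotient.lift₂ (fun x y => c.mkQ (x ⊔ y))
    (fun _ _ _ _ hx hy => Quotient.sound (c.sup_congr₂ hx hy))⟩

instance : Min c.Quo :=
  ⟨Quotient.lift₂ (fun x y => c.mkQ (x ⊓ y))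
    (fun _ _ _ _ hx hy => Quotient.sound (c.inf_congr₂ hx hy))⟩

theorem quo_sup_comm (a b : c.Quo) : a ⊔ b = b ⊔ a :=
  Quotient.inductionOn₂ a b fun x y => congrArg (Quotient.mk c.setoid) (sup_comm x y)

theorem quo_sup_assoc (a b d : c.Quo) : a ⊔ b ⊔ d = a ⊔ (b ⊔ d) :=
  Quotient.inductionOn₃ a b d fun x y z => congrArg (Quotient.mk c.setoid) (sup_assoc x y z)

theorem quo_inf_comm (a b : c.Quo) : a ⊓ b = b ⊓ a :=
  Quotient.inductionOn₂ a b fun x y => congrArg (Quotient.mk c.setoid) (inf_comm x y)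

theorem quo_inf_assoc (a b d : c.Quo) : a ⊓ b ⊓ d = a ⊓ (b ⊓ d) :=
  Quotient.inductionOn₃ a b d fun x y z => congrArg (Quotient.mk c.setoid) (inf_assoc x y z)

theorem quo_sup_inf_self (a b : c.Quo) : a ⊔ a ⊓ b = a :=
  Quotient.inductionOn₂ a b fun x y =>
    congrArg (Quotient.mk c.setoid) (sup_inf_self (a := x) (b := y))

theorem quo_inf_sup_self (a b : c.Quo) : a ⊓ (a ⊔ b) = a :=
  Quotient.inductionOn₂ a b fun x y =>
    congrArg (Quotient.mk c.setoid) (inf_sup_self (a := x) (b := y))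

/-- The quotient lattice `L/Θ`. -/
instance : Lattice c.Quo :=
  Lattice.mk' c.quo_sup_comm c.quo_sup_assoc c.quo_inf_comm c.quo_inf_assoc
    c.quo_sup_inf_self c.quo_inf_sup_self

end LatticeCongruence

open LatticeCongruence in
/-- A finite lattice is congruence-uniform if `j ↦ con(j₊, j)` is a bijection from
join-irreducibles of `L` onto join-irreducibles of `Con(L)`, and dually
`m ↦ con(m, m⁺)` is a bijection from meet-irreducibles of `L` onto
meet-irreducibles of `Con(L)`. -/
def IsCongruenceUniform (L : Type u) [Lattice L] : Prop :=
  (∀ j : L, SupIrred j → ∀ a : L, a ⋖ j → SupIrred (conGen a j)) ∧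
  (∀ j j' a a' : L, SupIrred j → SupIrred j' → a ⋖ j → a' ⋖ j' →
      conGen a j = conGen a' j' → j = j') ∧
  (∀ Θ : LatticeCongruence L, SupIrred Θ → ∃ j a : L, SupIrred j ∧ a ⋖ j ∧ conGen a j = Θ) ∧
  (∀ m : L, InfIrred m → ∀ b : L, m ⋖ b → InfIrred (conGen m b)) ∧
  (∀ m m' b b' : L, InfIrred m → InfIrred m' → m ⋖ b → m' ⋖ b' →
      conGen m b = conGen m' b' → m = m') ∧
  (∀ Θ : LatticeCongruence L, InfIrred Θ → ∃ m b : L, InfIrred m ∧ m ⋖ b ∧ conGen m b = Θ)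

/-- `C` is a maximal chain of the closed interval `[a, b]`. -/
def IsMaxChainIn {L : Type u} [Lattice L] (a b : L) (C : Set L) : Prop :=
  C ⊆ Set.Icc a b ∧ IsChain (· ≤ ·) C ∧
    ∀ D : Set L, D ⊆ Set.Icc a b → IsChain (· ≤ ·) D → C ⊆ D → C = D

/-- `u` and `v` are consecutive elements of the chain `C` (the covering pairs of `C`
viewed as a poset in its own right). -/
def ConsecIn {L : Type u} [Lattice L] (C : Set L) (u v : L) : Prop :=
  u ∈ C ∧ v ∈ C ∧ u < v ∧ ∀ w ∈ C, ¬(u < w ∧ w < v)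

/-- `lam` is a CN-labeling of the lattice `L` (with values in the poset `P`):
the defining conditions (CN1), (CN2), (CN3) hold in `L` and in its order-dual. -/
def IsCNLabeling {L : Type u} [Lattice L] {P : Type v} [PartialOrder P]
    (lam : L → L → P) : Prop :=
  (∀ x y z : L, x ≠ y → z ⋖ x → z ⋖ y →
    ∀ C₁ C₂ : Set L, IsMaxChainIn z (x ⊔ y) C₁ → IsMaxChainIn z (x ⊔ y) C₂ →
      x ∈ C₁ → y ∈ C₂ →
      (∀ x' ∈ C₁, x' ⋖ (x ⊔ y) → lam x' (x ⊔ y) = lam z y) ∧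
      (∀ y' ∈ C₂, y' ⋖ (x ⊔ y) → lam y' (x ⊔ y) = lam z x) ∧
      (∀ u v : L, ConsecIn C₁ u v → z < u → v < x ⊔ y →
        lam z x < lam u v ∧ lam z y < lam u v) ∧
      (∀ u v u' v' : L, ConsecIn C₁ u v → ConsecIn C₁ u' v' →
        lam u v = lam u' v' → u = u' ∧ v = v')) ∧
  (∀ x y z : L, x ≠ y → x ⋖ z → y ⋖ z →
    ∀ C₁ C₂ : Set L, IsMaxChainIn (x ⊓ y) z C₁ → IsMaxChainIn (x ⊓ y) z C₂ →
      x ∈ C₁ → y ∈ C₂ →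
      (∀ x' ∈ C₁, (x ⊓ y) ⋖ x' → lam (x ⊓ y) x' = lam y z) ∧
      (∀ y' ∈ C₂, (x ⊓ y) ⋖ y' → lam (x ⊓ y) y' = lam x z) ∧
      (∀ u v : L, ConsecIn C₁ u v → x ⊓ y < u → v < z →
        lam x z < lam u v ∧ lam y z < lam u v) ∧
      (∀ u v u' v' : L, ConsecIn C₁ u v → ConsecIn C₁ u' v' →
        lam u v = lam u' v' → u = u' ∧ v = v'))

/-- `lam` is a CU-labeling of the lattice `L`: a CN-labeling satisfying (CU1), (CU2). -/
def IsCULabeling {L : Type u} [Lattice L] {P : Type v} [PartialOrder P]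
    (lam : L → L → P) : Prop :=
  IsCNLabeling lam ∧
  (∀ j j' a a' : L, SupIrred j → SupIrred j' → a ⋖ j → a' ⋖ j' → j ≠ j' →
    lam a j ≠ lam a' j') ∧
  (∀ m m' b b' : L, InfIrred m → InfIrred m' → m ⋖ b → m' ⋖ b' → m ≠ m' →
    lam m b ≠ lam m' b')

/-- `λ↓(x)`: the set of labels of covering pairs below `x`. -/
def lamDown {L : Type u} [Lattice L] {P : Type v} (lam : L → L → P) (x : L) : Set P :=
  {p | ∃ y, y ⋖ x ∧ lam y x = p}

/-- `λ↑(x)`: the set of labels of covering pairs above `x`. -/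
def lamUp {L : Type u} [Lattice L] {P : Type v} (lam : L → L → P) (x : L) : Set P :=
  {p | ∃ y, x ⋖ y ∧ lam x y = p}

/-- Covering pairs `(x, y)` and `(w, z)` are associates. -/
def AreAssociates {L : Type u} [Lattice L] (x y w z : L) : Prop :=
  (y ⊓ w = x ∧ y ⊔ w = z) ∨ (x ⊓ z = w ∧ x ⊔ z = y)

/-- `x = ⋁ A` is the canonical join-representation of `x`. -/
def IsCanonicalJoinRep {L : Type u} [Lattice L] (A : Set L) (x : L) : Prop :=
  (∀ a ∈ A, SupIrred a) ∧ IsLUB A x ∧ (∀ B ⊂ A, ¬IsLUB B x) ∧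
    ∀ B : Set L, (∀ b ∈ B, SupIrred b) → IsLUB B x → (∀ B' ⊂ B, ¬IsLUB B' x) →
      ∀ a ∈ A, ∃ b ∈ B, a ≤ b

/-- `x = ⋀ A` is the canonical meet-representation of `x`. -/
def IsCanonicalMeetRep {L : Type u} [Lattice L] (A : Set L) (x : L) : Prop :=
  (∀ a ∈ A, InfIrred a) ∧ IsGLB A x ∧ (∀ B ⊂ A, ¬IsGLB B x) ∧
    ∀ B : Set L, (∀ b ∈ B, InfIrred b) → IsGLB B x → (∀ B' ⊂ B, ¬IsGLB B' x) →
      ∀ a ∈ A, ∃ b ∈ B, b ≤ a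


/-!
Let `f : L → L/Θ` be the quotient map. Its fibres are intervals, so every class has a greatest
element. The label of a cover that is not collapsed depends only on the classes of its ends:
if `w ⋖ v` with `w ≢ v` and `M` is the top of the class of `w`, then `λ(w, v) = λ(M, M ⊔ v)`.
This is a downward induction on `w`: if `w < M`, choose a cover `w ⋖ u ≤ M`; then (CN1), applied
to the covers `v` and `u` of `w`, gives `λ(w, v) = λ(M ⊓ (v ⊔ u), v ⊔ u)`, and the new pair lies
strictly higher in the same class. Moreover `M ⊔ v` depends only on the class of `v`.

For the conditions in the quotient, let `M` be the top of the class `Z` and lift each class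
`X ≥ Z` to `M ⊔ X₀`, where `X₀` is the least element of `X`; this is the least element of `X`
above `M`. The lift is monotone, preserves joins, and the lift of a class covering `Z` covers `M`.
A maximal chain of `[Z, X ⊔ Y]` lifts into a maximal chain between the lifts of `Z` and `X ⊔ Y`,
and each step of the quotient chain is the image of a step of the lifted chain, so each condition
in `L/Θ` is an instance of the same condition in `L`. The dual conditions follow by applying all
of this to the order duals.
-/

open Function OrderDual Set

section MaxChain

variable {L : Type*} [Lattice L] {a b x y u v : L} {C : Set L}

theorem IsMaxChainIn.mem_of_forall_comparable (h : IsMaxChainIn a b C) (hx : x ∈ Icc a b)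
    (hcomp : ∀ y ∈ C, x ≤ y ∨ y ≤ x) : x ∈ C := by
  have hchain : IsChain (· ≤ ·) (insert x C) := h.2.1.insert fun y hy _ => hcomp y hy
  rw [h.2.2 _ (insert_subset hx h.1) hchain (subset_insert x C)]
  exact mem_insert x C

theorem IsMaxChainIn.right_mem (h : IsMaxChainIn a b C) (hab : a ≤ b) : b ∈ C :=
  h.mem_of_forall_comparable ⟨hab, le_rfl⟩ fun _ hy => Or.inr (h.1 hy).2

theorem IsMaxChainIn.consecIn_of_covBy (h : IsMaxChainIn a b C) (hab : a ≤ b) (hu : u ∈ C)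
    (hub : u ⋖ b) : ConsecIn C u b :=
  ⟨hu, h.right_mem hab, hub.lt, fun _ _ hw => hub.2 hw.1 hw.2⟩

theorem IsMaxChainIn.covBy_of_consecIn (h : IsMaxChainIn a b C) (huv : ConsecIn C u v) :
    u ⋖ v := by
  obtain ⟨hu, hv, huv, hgap⟩ := huv
  refine ⟨huv, fun t hut htv => hgap t ?_ ⟨hut, htv⟩⟩
  refine h.mem_of_forall_comparable ⟨(h.1 hu).1.trans hut.le, htv.le.trans (h.1 hv).2⟩
    fun e he => ?_
  rcases h.2.1.total he hu with heu | hue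
  · exact Or.inr (heu.trans hut.le)
  rcases h.2.1.total he hv with hev | hve
  · by_cases heq : e = u
    · exact Or.inr (heq ▸ hut.le)
    by_cases heq' : e = v
    · exact Or.inl (heq' ▸ htv.le)
    exact absurd ⟨lt_of_le_of_ne hue (Ne.symm heq), lt_of_le_of_ne hev heq'⟩ (hgap e he)
  · exact Or.inl (htv.le.trans hve)

theorem exists_isMaxChainIn_superset [Finite L] {C₀ : Set L} (hC₀ : C₀ ⊆ Icc a b)
    (hchain : IsChain (· ≤ ·) C₀) : ∃ C, C₀ ⊆ C ∧ IsMaxChainIn a b C := by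
  obtain ⟨C, ⟨hC₀C, hCab, hCchain⟩, hmax⟩ :=
    (toFinite {C : Set L | C₀ ⊆ C ∧ C ⊆ Icc a b ∧ IsChain (· ≤ ·) C}).exists_maximal
      ⟨C₀, subset_rfl, hC₀, hchain⟩
  exact ⟨C, hC₀C, hCab, hCchain, fun D hD hDchain hCD =>
    hCD.antisymm (hmax ⟨hC₀C.trans hCD, hD, hDchain⟩ hCD)⟩

theorem exists_isMaxChainIn_mem_of_le [Finite L] (hax : a ≤ x) (hxy : x ≤ y) (hyb : y ≤ b) :
    ∃ C, IsMaxChainIn a b C ∧ x ∈ C ∧ y ∈ C := by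
  obtain ⟨C, hxyC, hC⟩ := exists_isMaxChainIn_superset (C₀ := {x, y})
    (pair_subset ⟨hax, hxy.trans hyb⟩ ⟨hax.trans hxy, hyb⟩) (IsChain.pair hxy)
  exact ⟨C, hC, hxyC (mem_insert x _), hxyC (mem_insert_of_mem x rfl)⟩

end MaxChain

def IsUpperCNLabeling {L P : Type*} [Lattice L] [PartialOrder P] (lam : L → L → P) : Prop :=
  ∀ x y z : L, x ≠ y → z ⋖ x → z ⋖ y →
    ∀ C₁ C₂ : Set L, IsMaxChainIn z (x ⊔ y) C₁ → IsMaxChainIn z (x ⊔ y) C₂ →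
      x ∈ C₁ → y ∈ C₂ →
      (∀ x' ∈ C₁, x' ⋖ (x ⊔ y) → lam x' (x ⊔ y) = lam z y) ∧
      (∀ y' ∈ C₂, y' ⋖ (x ⊔ y) → lam y' (x ⊔ y) = lam z x) ∧
      (∀ u v : L, ConsecIn C₁ u v → z < u → v < x ⊔ y →
        lam z x < lam u v ∧ lam z y < lam u v) ∧
      (∀ u v u' v' : L, ConsecIn C₁ u v → ConsecIn C₁ u' v' →
        lam u v = lam u' v' → u = u' ∧ v = v')

section Duality

variable {L P : Type*} [Lattice L] {a b u v : L} {C : Set L}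

theorem IsMaxChainIn.dual (h : IsMaxChainIn a b C) :
    IsMaxChainIn (toDual b) (toDual a) (ofDual ⁻¹' C) := by
  refine ⟨fun x hx => ⟨(h.1 hx).2, (h.1 hx).1⟩, h.2.1.symm, fun D hD hDchain hCD => ?_⟩
  exact congrArg (ofDual ⁻¹' ·)
    (h.2.2 (toDual ⁻¹' D) (fun x hx => ⟨(hD hx).2, (hD hx).1⟩) hDchain.symm hCD)

theorem ConsecIn.dual (h : ConsecIn C u v) : ConsecIn (ofDual ⁻¹' C) (toDual v) (toDual u) :=
  ⟨h.2.1, h.1, h.2.2.1, fun w hw hvwu => h.2.2.2 (ofDual w) hw hvwu.symm⟩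

theorem isCNLabeling_iff [PartialOrder P] {lam : L → L → P} : IsCNLabeling lam ↔
    IsUpperCNLabeling lam ∧ IsUpperCNLabeling fun a b : Lᵒᵈ => lam (ofDual b) (ofDual a) := by
  refine and_congr Iff.rfl ⟨fun h x y z hxy hx hy C₁ C₂ hC₁ hC₂ hxC hyC => ?_,
    fun h x y z hxy hx hy C₁ C₂ hC₁ hC₂ hxC hyC => ?_⟩
  · obtain ⟨H1, H2, H3, H4⟩ := h (ofDual x) (ofDual y) (ofDual z) hxy
      (ofDual_covBy_ofDual_iff.2 hx) (ofDual_covBy_ofDual_iff.2 hy) _ _ hC₁.dual hC₂.dual hxC hyC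
    exact ⟨fun x' hx' hcov => H1 x' hx' (ofDual_covBy_ofDual_iff.2 hcov),
      fun y' hy' hcov => H2 y' hy' (ofDual_covBy_ofDual_iff.2 hcov),
      fun u v huv hzu hvt => H3 _ _ huv.dual hvt hzu,
      fun u v u' v' huv hu'v' heq => (H4 _ _ _ _ huv.dual hu'v'.dual heq).symm⟩
  · obtain ⟨H1, H2, H3, H4⟩ := h (toDual x) (toDual y) (toDual z) hxy
      (toDual_covBy_toDual_iff.2 hx) (toDual_covBy_toDual_iff.2 hy) _ _ hC₁.dual hC₂.dual hxC hyC
    exact ⟨fun x' hx' hcov => H1 x' hx' (toDual_covBy_toDual_iff.2 hcov),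
      fun y' hy' hcov => H2 y' hy' (toDual_covBy_toDual_iff.2 hcov),
      fun u v huv hzu hvt => H3 _ _ huv.dual hvt hzu,
      fun u v u' v' huv hu'v' heq => (H4 _ _ _ _ huv.dual hu'v'.dual heq).symm⟩

end Duality

namespace LatticeHom

variable {L Q : Type*} [Lattice L] [Lattice Q]

theorem map_eq_of_le_of_le (f : LatticeHom L Q) {a b c : L} (hab : a ≤ b) (hbc : b ≤ c)
    (hac : f a = f c) : f b = f a :=
  le_antisymm (hac ▸ OrderHomClass.mono f hbc) (OrderHomClass.mono f hab)

theorem le_sup_of_covBy_of_map_eq (f : LatticeHom L Q) {w v M e : L} (hwv : w ⋖ v)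
    (hne : f w ≠ f v) (hwM : w ≤ M) (hM : f M = f w) (he : f e = f v) : v ≤ M ⊔ e := by
  have hfwv : f w ≤ f v := OrderHomClass.mono f hwv.le
  rcases hwv.eq_or_eq (le_inf hwv.le (hwM.trans le_sup_left)) (inf_le_left (b := M ⊔ e))
    with hw | hv
  · refine absurd ?_ hne
    rw [← hw, map_inf, map_sup, hM, he, sup_eq_right.2 hfwv, inf_idem]
  · exact inf_eq_left.1 hv

variable [Finite L]

theorem exists_isGreatest_preimage (f : LatticeHom L Q) {X : Q} (hX : X ∈ range f) :
    ∃ m, IsGreatest (f ⁻¹' {X}) m := by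
  obtain ⟨m, hm⟩ := (toFinite (f ⁻¹' {X})).exists_maximal hX
  refine ⟨m, hm.1, fun y hy => ?_⟩
  have hsup : m ⊔ y ∈ f ⁻¹' {X} := by
    simp only [mem_preimage, mem_singleton_iff, map_sup] at hm hy ⊢
    rw [hm.1, hy, sup_idem]
  exact le_sup_right.trans (hm.2 hsup le_sup_left)

theorem exists_isLeast_preimage (f : LatticeHom L Q) {X : Q} (hX : X ∈ range f) :
    ∃ b, IsLeast (f ⁻¹' {X}) b :=
  LatticeHom.dual f |>.exists_isGreatest_preimage (X := toDual X) hX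

variable {f : LatticeHom L Q} (hf : Surjective f) {m : L}

noncomputable def fiberBot (X : Q) : L :=
  (f.exists_isLeast_preimage (hf.range_eq ▸ mem_univ X)).choose

theorem isLeast_fiberBot (X : Q) : IsLeast (f ⁻¹' {X}) (fiberBot hf X) :=
  (f.exists_isLeast_preimage (hf.range_eq ▸ mem_univ X)).choose_spec

theorem map_fiberBot (X : Q) : f (fiberBot hf X) = X := (isLeast_fiberBot hf X).1

theorem gc_fiberBot : GaloisConnection (fiberBot hf) f := fun X y => by
  refine ⟨fun h => map_fiberBot hf X ▸ OrderHomClass.mono f h, fun h => ?_⟩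
  have hmem : fiberBot hf X ⊓ y ∈ f ⁻¹' {X} := by
    rw [mem_preimage, map_inf, map_fiberBot, inf_eq_left.2 h, mem_singleton_iff]
  exact ((isLeast_fiberBot hf X).2 hmem).trans inf_le_right

theorem map_sup_fiberBot {X : Q} (hX : f m ≤ X) : f (m ⊔ fiberBot hf X) = X := by
  rw [map_sup, map_fiberBot, sup_eq_right.2 hX]

theorem monotone_sup_fiberBot : Monotone fun X => m ⊔ fiberBot hf X :=
  fun _ _ h => sup_le_sup_left ((gc_fiberBot hf).monotone_l h) m

theorem sup_fiberBot_map_le {e : L} (hme : m ≤ e) : m ⊔ fiberBot hf (f e) ≤ e :=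
  sup_le hme ((gc_fiberBot hf).l_u_le e)

theorem covBy_sup_fiberBot (hm : IsGreatest (f ⁻¹' {f m}) m) {X : Q} (hX : f m ⋖ X) :
    m ⋖ m ⊔ fiberBot hf X := by
  have hfX := map_sup_fiberBot hf hX.le
  refine ⟨lt_of_le_of_ne le_sup_left fun h => hX.ne (by rw [h, hfX]), fun t hmt htX => ?_⟩
  rcases hX.eq_or_eq (OrderHomClass.mono f hmt.le) (hfX ▸ OrderHomClass.mono f htX.le)
    with ht | ht
  · exact hmt.not_ge (hm.2 ht)
  · exact htX.not_ge (sup_le hmt.le ((gc_fiberBot hf).l_le ht.ge))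

theorem exists_isMaxChainIn_lift {T : Q} (hmT : f m ≤ T) {𝒞 : Set Q}
    (h𝒞 : IsMaxChainIn (f m) T 𝒞) :
    ∃ C, IsMaxChainIn m (m ⊔ fiberBot hf T) C ∧ (∀ X ∈ 𝒞, m ⊔ fiberBot hf X ∈ C) ∧
      ∀ e ∈ C, f e ∈ 𝒞 := by
  have hmono := monotone_sup_fiberBot hf (m := m)
  obtain ⟨C, h𝒞C, hC⟩ := exists_isMaxChainIn_superset
    (image_subset_iff.2 fun X hX => ⟨le_sup_left, hmono (h𝒞.1 hX).2⟩)
    (hmono.isChain_image h𝒞.2.1)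
  refine ⟨C, hC, fun X hX => h𝒞C (mem_image_of_mem _ hX), fun e he => ?_⟩
  refine h𝒞.mem_of_forall_comparable ⟨OrderHomClass.mono f (hC.1 he).1,
    map_sup_fiberBot hf hmT ▸ OrderHomClass.mono f (hC.1 he).2⟩ fun X hX => ?_
  rw [← map_sup_fiberBot hf (h𝒞.1 hX).1]
  exact (hC.2.1.total he (h𝒞C (mem_image_of_mem _ hX))).imp
    (fun h => OrderHomClass.mono f h) fun h => OrderHomClass.mono f h

theorem exists_consecIn_lift {𝒞 : Set Q} {C : Set L} (h𝒞 : 𝒞 ⊆ Ici (f m)) (hC : C ⊆ Ici m)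
    (hg : ∀ X ∈ 𝒞, m ⊔ fiberBot hf X ∈ C) (hfC : ∀ e ∈ C, f e ∈ 𝒞) {U V : Q}
    (hUV : ConsecIn 𝒞 U V) : ∃ u, ConsecIn C u (m ⊔ fiberBot hf V) ∧ f u = U := by
  obtain ⟨hU, hV, hUV, hgap⟩ := hUV
  have hfU := map_sup_fiberBot hf (h𝒞 hU)
  have hfV := map_sup_fiberBot hf (h𝒞 hV)
  have hgUV : m ⊔ fiberBot hf U < m ⊔ fiberBot hf V :=
    lt_of_le_of_ne (monotone_sup_fiberBot hf hUV.le) fun h => hUV.ne (by rw [← hfU, h, hfV])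
  obtain ⟨u, hgUu, ⟨huC, huV⟩, humax⟩ :=
    (toFinite {e ∈ C | e < m ⊔ fiberBot hf V}).exists_le_maximal ⟨hg U hU, hgUV⟩
  refine ⟨u, ⟨huC, hg V hV, huV, fun w hw ⟨huw, hwV⟩ => huw.not_ge (humax ⟨hw, hwV⟩ huw.le)⟩,
    ?_⟩
  have hUu : U ≤ f u := hfU ▸ OrderHomClass.mono f hgUu
  have huV' : f u < V := by
    refine lt_of_le_of_ne (hfV ▸ OrderHomClass.mono f huV.le) fun h => huV.not_ge ?_
    exact h ▸ sup_fiberBot_map_le hf (hC huC)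
  by_contra hne
  exact hgap (f u) (hfC u huC) ⟨lt_of_le_of_ne hUu (Ne.symm hne), huV'⟩

end LatticeHom

section Descent

open LatticeHom

variable {L Q P : Type*} [Lattice L] [Lattice Q] [Finite L] {lam : L → L → P}
  {f : LatticeHom L Q} {t : Q → Q → P}

theorem IsUpperCNLabeling.label_eq_label_sup_of_isGreatest [PartialOrder P]
    (hlam : IsUpperCNLabeling lam) {w v M : L} (hM : IsGreatest (f ⁻¹' {f w}) M) (hwv : w ⋖ v)
    (hne : f w ≠ f v) : lam w v = lam M (M ⊔ v) := by
  induction w using WellFoundedGT.induction generalizing v with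
  | _ w IH =>
  have hfM : f M = f w := hM.1
  rcases (hM.2 rfl : w ≤ M).eq_or_lt with rfl | hwM
  · rw [sup_eq_right.2 hwv.le]
  obtain ⟨u, hwu, huM⟩ := exists_covBy_le_of_lt hwM
  have hfu : f u = f w := f.map_eq_of_le_of_le hwu.le huM hfM.symm
  have hfwv : f w ≤ f v := OrderHomClass.mono f hwv.le
  have hfs : f (v ⊔ u) = f v := by rw [map_sup, hfu, sup_eq_left.2 hfwv]
  have hfm : f (M ⊓ (v ⊔ u)) = f w := by rw [map_inf, hfM, hfs, inf_eq_left.2 hfwv]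
  have hum : u ≤ M ⊓ (v ⊔ u) := le_inf huM le_sup_right
  have hms : M ⊓ (v ⊔ u) ⋖ v ⊔ u := by
    refine ⟨lt_of_le_of_ne inf_le_right fun h => hne ?_, fun t hmt hts => ?_⟩
    · rw [← hfm, h, hfs]
    rcases hwv.eq_or_eq (le_inf (hwu.le.trans (hum.trans hmt.le)) hwv.le) inf_le_right
      with htw | htv
    · have hft : f t = f w := by
        rw [← htw, map_inf, inf_eq_left.2 (hfs ▸ OrderHomClass.mono f hts.le)]
      exact hmt.not_ge (le_inf (hM.2 hft) hts.le)
    · exact hts.not_ge (sup_le (htv ▸ inf_le_left) (hum.trans hmt.le))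
  have hlabel : lam (M ⊓ (v ⊔ u)) (v ⊔ u) = lam w v := by
    obtain ⟨C₁, hC₁, hvC₁, -⟩ :=
      exists_isMaxChainIn_mem_of_le hwv.le le_rfl (le_sup_left : v ≤ v ⊔ u)
    obtain ⟨C₂, hC₂, huC₂, hmC₂⟩ := exists_isMaxChainIn_mem_of_le hwu.le hum inf_le_right
    have hvu : v ≠ u := fun h => hne (by rw [h, hfu])
    exact (hlam v u w hvu hwv hwu C₁ C₂ hC₁ hC₂ hvC₁ huC₂).2.1 _ hmC₂ hms
  rw [← hlabel, IH _ (hwu.lt.trans_le hum) (hfm ▸ hM) hms (by rw [hfm, hfs]; exact hne),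
    ← sup_assoc, sup_right_comm, sup_eq_left.2 huM]

theorem IsUpperCNLabeling.label_eq_of_map_eq [PartialOrder P] (hlam : IsUpperCNLabeling lam)
    {x y x' y' : L} (h : x ⋖ y) (h' : x' ⋖ y') (hne : f x ≠ f y) (hx : f x = f x')
    (hy : f y = f y') : lam x y = lam x' y' := by
  obtain ⟨M, hM⟩ := f.exists_isGreatest_preimage (mem_range_self x)
  have hM' : IsGreatest (f ⁻¹' {f x'}) M := hx ▸ hM
  have hne' : f x' ≠ f y' := hx ▸ hy ▸ hne
  have hsup : M ⊔ y = M ⊔ y' :=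
    le_antisymm (sup_le le_sup_left (f.le_sup_of_covBy_of_map_eq h hne (hM.2 rfl) hM.1 hy.symm))
      (sup_le le_sup_left (f.le_sup_of_covBy_of_map_eq h' hne' (hM'.2 rfl) hM'.1 hy))
  rw [hlam.label_eq_label_sup_of_isGreatest hM h hne,
    hlam.label_eq_label_sup_of_isGreatest hM' h' hne', hsup]

theorem exists_consecIn_lift_label (hf : Surjective f)
    (ht : ∀ x y, x ⋖ y → f x ≠ f y → t (f x) (f y) = lam x y)
    {m b : L} {T : Q} {𝒞 : Set Q} {C : Set L} (h𝒞 : IsMaxChainIn (f m) T 𝒞)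
    (hC : IsMaxChainIn m b C) (hg : ∀ X ∈ 𝒞, m ⊔ fiberBot hf X ∈ C) (hfC : ∀ e ∈ C, f e ∈ 𝒞)
    {U V : Q} (hUV : ConsecIn 𝒞 U V) :
    ∃ u, ConsecIn C u (m ⊔ fiberBot hf V) ∧ f u = U ∧ t U V = lam u (m ⊔ fiberBot hf V) := by
  obtain ⟨u, hu, rfl⟩ :=
    exists_consecIn_lift hf (fun _ h => (h𝒞.1 h).1) (fun _ h => (hC.1 h).1) hg hfC hUV
  have hfV := map_sup_fiberBot hf (h𝒞.1 hUV.2.1).1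
  have h := ht _ _ (hC.covBy_of_consecIn hu) (by rw [hfV]; exact hUV.2.2.1.ne)
  rw [hfV] at h
  exact ⟨u, hu, rfl, h⟩

theorem label_eq_label_sup_fiberBot (hf : Surjective f)
    (ht : ∀ x y, x ⋖ y → f x ≠ f y → t (f x) (f y) = lam x y) {m : L}
    (hm : IsGreatest (f ⁻¹' {f m}) m) {X : Q} (hX : f m ⋖ X) :
    t (f m) X = lam m (m ⊔ fiberBot hf X) := by
  have hfX := map_sup_fiberBot hf hX.le
  rw [← ht _ _ (covBy_sup_fiberBot hf hm hX) (by rw [hfX]; exact hX.ne), hfX]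

theorem IsUpperCNLabeling.of_surjective [PartialOrder P] (hlam : IsUpperCNLabeling lam)
    (hf : Surjective f) (ht : ∀ x y, x ⋖ y → f x ≠ f y → t (f x) (f y) = lam x y) :
    IsUpperCNLabeling t := by
  intro X Y Z hXY hZX hZY 𝒞₁ 𝒞₂ h𝒞₁ h𝒞₂ hX hY
  obtain ⟨m, hm⟩ := f.exists_isGreatest_preimage (hf.range_eq ▸ mem_univ Z)
  obtain rfl : f m = Z := hm.1
  have hfX := map_sup_fiberBot hf hZX.le
  have hfY := map_sup_fiberBot hf hZY.le
  have hZT : f m ≤ X ⊔ Y := hZX.le.trans le_sup_left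
  have hsup : m ⊔ fiberBot hf (X ⊔ Y) = (m ⊔ fiberBot hf X) ⊔ (m ⊔ fiberBot hf Y) := by
    rw [(gc_fiberBot hf).l_sup, sup_sup_distrib_left]
  obtain ⟨C₁, hC₁, hgC₁, hfC₁⟩ := exists_isMaxChainIn_lift hf hZT h𝒞₁
  obtain ⟨C₂, hC₂, hgC₂, hfC₂⟩ := exists_isMaxChainIn_lift hf hZT h𝒞₂
  rw [hsup] at hC₁ hC₂
  have hxy : m ⊔ fiberBot hf X ≠ m ⊔ fiberBot hf Y := fun h => hXY (by rw [← hfX, h, hfY])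
  obtain ⟨H1, H2, H3, H4⟩ := hlam _ _ m hxy (covBy_sup_fiberBot hf hm hZX)
    (covBy_sup_fiberBot hf hm hZY) C₁ C₂ hC₁ hC₂ (hgC₁ X hX) (hgC₂ Y hY)
  have htX := label_eq_label_sup_fiberBot hf ht hm hZX
  have htY := label_eq_label_sup_fiberBot hf ht hm hZY
  refine ⟨fun X' hX' hcov => ?_, fun Y' hY' hcov => ?_, fun U V hUV hZU hVT => ?_,
    fun U V U' V' hUV hUV' heq => ?_⟩
  · obtain ⟨u, hu, rfl, hlabel⟩ := exists_consecIn_lift_label hf ht h𝒞₁ hC₁ hgC₁ hfC₁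
      (h𝒞₁.consecIn_of_covBy hZT hX' hcov)
    rw [hlabel, htY, hsup]
    exact H1 u hu.1 (hsup ▸ hC₁.covBy_of_consecIn hu)
  · obtain ⟨u, hu, rfl, hlabel⟩ := exists_consecIn_lift_label hf ht h𝒞₂ hC₂ hgC₂ hfC₂
      (h𝒞₂.consecIn_of_covBy hZT hY' hcov)
    rw [hlabel, htX, hsup]
    exact H2 u hu.1 (hsup ▸ hC₂.covBy_of_consecIn hu)
  · obtain ⟨u, hu, rfl, hlabel⟩ := exists_consecIn_lift_label hf ht h𝒞₁ hC₁ hgC₁ hfC₁ hUV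
    have hfV := map_sup_fiberBot hf (h𝒞₁.1 hUV.2.1).1
    rw [hlabel, htX, htY]
    refine H3 u _ hu (lt_of_le_of_ne (hC₁.1 hu.1).1 fun h => hZU.ne (congrArg f h))
      (lt_of_le_of_ne (hC₁.1 hu.2.1).2 fun h => hVT.ne ?_)
    rw [← hfV, h, ← hsup, map_sup_fiberBot hf hZT]
  · obtain ⟨u, hu, rfl, hlabel⟩ := exists_consecIn_lift_label hf ht h𝒞₁ hC₁ hgC₁ hfC₁ hUV
    obtain ⟨u', hu', rfl, hlabel'⟩ := exists_consecIn_lift_label hf ht h𝒞₁ hC₁ hgC₁ hfC₁ hUV'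
    obtain ⟨rfl, hV⟩ := H4 _ _ _ _ hu hu' (hlabel ▸ hlabel' ▸ heq)
    refine ⟨rfl, ?_⟩
    rw [← map_sup_fiberBot hf (h𝒞₁.1 hUV.2.1).1, hV, map_sup_fiberBot hf (h𝒞₁.1 hUV'.2.1).1]

theorem IsCNLabeling.of_surjective [PartialOrder P] (hlam : IsCNLabeling lam)
    (hf : Surjective f) (ht : ∀ x y, x ⋖ y → f x ≠ f y → t (f x) (f y) = lam x y) :
    IsCNLabeling t := by
  rw [isCNLabeling_iff] at hlam ⊢
  exact ⟨hlam.1.of_surjective hf ht, hlam.2.of_surjective (f := LatticeHom.dual f) hf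
    fun x y hxy hne => ht _ _ (ofDual_covBy_ofDual_iff.2 hxy) (Ne.symm hne)⟩

end Descent

theorem exists_label_lift {L Q P : Type*} [Preorder L] {f : L → Q} (hf : Surjective f)
    {lam : L → L → P} (hlam : ∀ x y x' y' : L, x ⋖ y → x' ⋖ y' → f x ≠ f y → f x = f x' →
      f y = f y' → lam x y = lam x' y') :
    ∃ t : Q → Q → P, ∀ x y, x ⋖ y → f x ≠ f y → t (f x) (f y) = lam x y := by
  classical
  refine ⟨fun X Y => if h : ∃ p : L × L, p.1 ⋖ p.2 ∧ f p.1 ≠ f p.2 ∧ f p.1 = X ∧ f p.2 = Y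
    then lam h.choose.1 h.choose.2 else lam (surjInv hf X) (surjInv hf Y), fun x y hxy hne => ?_⟩
  have hex : ∃ p : L × L, p.1 ⋖ p.2 ∧ f p.1 ≠ f p.2 ∧ f p.1 = f x ∧ f p.2 = f y :=
    ⟨(x, y), hxy, hne, rfl, rfl⟩
  obtain ⟨h₁, h₂, h₃, h₄⟩ := hex.choose_spec
  simp only [dif_pos hex]
  exact hlam _ _ _ _ h₁ hxy h₂ h₃ h₄

def LatticeCongruence.mkQHom {L : Type*} [Lattice L] (c : LatticeCongruence L) :
    LatticeHom L c.Quo where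
  toFun := c.mkQ
  map_sup' _ _ := rfl
  map_inf' _ _ := rfl

/-- A CN-labeling of `L` induces a well-defined CN-labeling of any
quotient `L/Θ`, by labeling a covering pair of the quotient with the label of any
representing covering pair of `L`. -/
theorem cn_labeling_descends_to_quotient
    {L : Type u} [Lattice L] [Fintype L] {P : Type v} [PartialOrder P]
    (lam : L → L → P) (hlam : IsCNLabeling lam) (c : LatticeCongruence L) :
    (∀ x y x' y' : L, x ⋖ y → x' ⋖ y' → ¬c.r x y →
        c.mkQ x = c.mkQ x' → c.mkQ y = c.mkQ y' → lam x y = lam x' y') ∧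
      ∃ tlam : c.Quo → c.Quo → P,
        (∀ x y : L, x ⋖ y → ¬c.r x y → tlam (c.mkQ x) (c.mkQ y) = lam x y) ∧
        IsCNLabeling tlam := by
  have hf : Surjective c.mkQHom := Quotient.mk_surjective
  have hr : ∀ {x y}, c.r x y ↔ c.mkQHom x = c.mkQHom y := (Quotient.eq (r := c.setoid)).symm
  have hwd : ∀ x y x' y' : L, x ⋖ y → x' ⋖ y' → c.mkQHom x ≠ c.mkQHom y →
      c.mkQHom x = c.mkQHom x' → c.mkQHom y = c.mkQHom y' → lam x y = lam x' y' :=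
    fun _ _ _ _ => (isCNLabeling_iff.1 hlam).1.label_eq_of_map_eq
  obtain ⟨t, ht⟩ := exists_label_lift hf hwd
  exact ⟨fun x y x' y' h h' hxy => hwd x y x' y' h h' (mt hr.2 hxy), t,
    fun x y h hxy => ht x y h (mt hr.2 hxy), hlam.of_surjective hf ht⟩
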